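/- Let a ≤ b be reals, let x ∈ [0,1], and set α = (1−x)·a + x·b and κ = z(a) − 2·z((a+b)/2) + z(b), where z(β) = log Z(β). Then |(z(α) − z(a)) − x·(z(b) − z(a))| ≤ κ. -/

import Mathlib

/-!
Hölder's inequality makes `β ↦ log Z(β)` convex. For any convex `f`, the gap
`f((1-x)a + xb) - (1-x) f(a) - x f(b)` is nonpositive, and it is bounded below by minus the
second difference `f(a) - 2 f((a+b)/2) + f(b)`: for `x ≤ 1/2` the midpoint lies between
`(1-x)a + xb` and `b`, and convexity on that segment gives the bound; `x ≥ 1/2` is symmetric.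
-/

open Real Set

/-- Partition function of a continuous Gibbs distribution with counts `c`
(finite support): `Z(β) = ∑_x c(x)·e^{βx}`. -/
noncomputable def gibbsZ (c : ℝ → ℝ) (hc : (Function.support c).Finite) (β : ℝ) : ℝ :=
  ∑ x ∈ hc.toFinset, c x * Real.exp (β * x)

/-- Log partition function `z(β) = log Z(β)`. -/
noncomputable def gibbsLogZ (c : ℝ → ℝ) (hc : (Function.support c).Finite) (β : ℝ) : ℝ :=
  Real.log (gibbsZ c hc β)

section ConvexGap

variable {f : ℝ → ℝ}

theorem ConvexOn.two_mul_map_midpoint_le (hf : ConvexOn ℝ univ f) (a b : ℝ) :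
    2 * f ((a + b) / 2) ≤ f a + f b := by
  have h := hf.2 (mem_univ a) (mem_univ b) (by norm_num : (0 : ℝ) ≤ 1 / 2)
    (by norm_num : (0 : ℝ) ≤ 1 / 2) (by norm_num)
  simp only [smul_eq_mul] at h
  rw [show 1 / 2 * a + 1 / 2 * b = (a + b) / 2 by ring] at h
  linarith

theorem ConvexOn.neg_le_secant_gap_of_le_half (hf : ConvexOn ℝ univ f) (a b : ℝ) {x : ℝ}
    (hx₀ : 0 ≤ x) (hx : x ≤ 1 / 2) :
    -(f a - 2 * f ((a + b) / 2) + f b) ≤ f ((1 - x) * a + x * b) - f a - x * (f b - f a) := by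
  have hx₁ : 0 < 1 - x := by linarith
  have hweights : 1 / (2 * (1 - x)) + (1 - 2 * x) / (2 * (1 - x)) = 1 := by
    field_simp
    ring
  have hpoint : 1 / (2 * (1 - x)) * ((1 - x) * a + x * b) + (1 - 2 * x) / (2 * (1 - x)) * b =
      (a + b) / 2 := by
    field_simp
    ring
  have hmid : f ((a + b) / 2) ≤
      1 / (2 * (1 - x)) * f ((1 - x) * a + x * b) + (1 - 2 * x) / (2 * (1 - x)) * f b := by
    simpa only [smul_eq_mul, hpoint] using hf.2 (mem_univ ((1 - x) * a + x * b)) (mem_univ b)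
      (by positivity) (div_nonneg (by linarith) (by positivity)) hweights
  have hmid' : 2 * (1 - x) * f ((a + b) / 2) ≤ f ((1 - x) * a + x * b) + (1 - 2 * x) * f b := by
    have := mul_le_mul_of_nonneg_left hmid (by positivity : (0 : ℝ) ≤ 2 * (1 - x))
    field_simp at this
    linarith
  have hκ : 0 ≤ x * (f a - 2 * f ((a + b) / 2) + f b) :=
    mul_nonneg hx₀ (by linarith [hf.two_mul_map_midpoint_le a b])
  linarith

theorem ConvexOn.abs_secant_gap_le (hf : ConvexOn ℝ univ f) (a b : ℝ) {x : ℝ}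
    (hx : x ∈ Icc (0 : ℝ) 1) :
    |f ((1 - x) * a + x * b) - f a - x * (f b - f a)| ≤ f a - 2 * f ((a + b) / 2) + f b := by
  obtain ⟨hx₀, hx₁⟩ := hx
  have hupper : f ((1 - x) * a + x * b) ≤ (1 - x) * f a + x * f b := by
    simpa using hf.2 (mem_univ a) (mem_univ b) (sub_nonneg.2 hx₁) hx₀ (by ring)
  have hmid := hf.two_mul_map_midpoint_le a b
  refine abs_le.2 ⟨?_, by linarith⟩
  rcases le_total x (1 / 2) with hx | hx
  · exact hf.neg_le_secant_gap_of_le_half a b hx₀ hx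
  · have h := hf.neg_le_secant_gap_of_le_half b a (sub_nonneg.2 hx₁) (by linarith)
    rw [show (1 - (1 - x)) * b + (1 - x) * a = (1 - x) * a + x * b by ring, add_comm b a] at h
    linarith

end ConvexGap

section Gibbs

variable (c : ℝ → ℝ) (hc : (Function.support c).Finite)

theorem gibbsZ_pos (hnonneg : ∀ x, 0 ≤ c x) (hne : c ≠ 0) (β : ℝ) : 0 < gibbsZ c hc β := by
  obtain ⟨x₀, hx₀⟩ := Function.ne_iff.1 hne
  refine Finset.sum_pos' (fun x _ => mul_nonneg (hnonneg x) (exp_pos _).le)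
    ⟨x₀, by simpa using hx₀, mul_pos ((hnonneg x₀).lt_of_ne' hx₀) (exp_pos _)⟩

theorem gibbsZ_le_rpow_mul_rpow (hnonneg : ∀ x, 0 ≤ c x) {t : ℝ} (ht₀ : 0 < t) (ht₁ : t < 1)
    (u v : ℝ) :
    gibbsZ c hc (t * u + (1 - t) * v) ≤ gibbsZ c hc u ^ t * gibbsZ c hc v ^ (1 - t) := by
  set w : ℝ → ℝ → ℝ := fun β x => c x * exp (β * x)
  have hw : ∀ β x, 0 ≤ w β x := fun β x => mul_nonneg (hnonneg x) (exp_pos _).le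
  have hsplit : ∀ x, w (t * u + (1 - t) * v) x = w u x ^ t * w v x ^ (1 - t) := by
    intro x
    simp only [w, mul_rpow (hnonneg x) (exp_pos _).le, ← exp_mul]
    rw [mul_mul_mul_comm, ← rpow_add' (hnonneg x) (by norm_num), add_sub_cancel, rpow_one,
      ← exp_add]
    ring_nf
  have hunpow : ∀ β x {s : ℝ}, s ≠ 0 → (w β x ^ s) ^ s⁻¹ = w β x := fun β x s hs =>
    rpow_rpow_inv (hw β x) hs
  have holder := inner_le_Lp_mul_Lq_of_nonneg hc.toFinset
    (HolderConjugate.inv_one_sub_inv ht₀ ht₁)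
    (fun x _ => rpow_nonneg (hw u x) t) (fun x _ => rpow_nonneg (hw v x) (1 - t))
  simp only [hunpow _ _ ht₀.ne', hunpow _ _ (sub_pos.2 ht₁).ne', one_div, inv_inv, ← hsplit]
    at holder
  exact holder

theorem convexOn_gibbsLogZ (hnonneg : ∀ x, 0 ≤ c x) (hne : c ≠ 0) :
    ConvexOn ℝ univ (gibbsLogZ c hc) := by
  refine ⟨convex_univ, fun u _ v _ t s ht hs hts => ?_⟩
  obtain rfl : s = 1 - t := by linarith
  simp only [smul_eq_mul]
  rcases ht.eq_or_lt with rfl | ht₀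
  · simp
  rcases hs.eq_or_lt with hs₀ | hs₀
  · obtain rfl : t = 1 := by linarith
    simp
  have hZ := gibbsZ_pos c hc hnonneg hne
  calc gibbsLogZ c hc (t * u + (1 - t) * v)
      ≤ log (gibbsZ c hc u ^ t * gibbsZ c hc v ^ (1 - t)) :=
        log_le_log (hZ _) (gibbsZ_le_rpow_mul_rpow c hc hnonneg ht₀ (by linarith) u v)
    _ = t * gibbsLogZ c hc u + (1 - t) * gibbsLogZ c hc v := by
        rw [log_mul (rpow_pos_of_pos (hZ u) t).ne' (rpow_pos_of_pos (hZ v) _).ne',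
          log_rpow (hZ u), log_rpow (hZ v)]
        rfl

end Gibbs

theorem stmt_7_general (c : ℝ → ℝ) (hc : (Function.support c).Finite)
    (hnonneg : ∀ x, 0 ≤ c x) (hne : c ≠ 0)
    (a b : ℝ) (x : ℝ) (hx : x ∈ Set.Icc (0 : ℝ) 1) :
    |(gibbsLogZ c hc ((1 - x) * a + x * b) - gibbsLogZ c hc a)
        - x * (gibbsLogZ c hc b - gibbsLogZ c hc a)| ≤
      gibbsLogZ c hc a - 2 * gibbsLogZ c hc ((a + b) / 2) + gibbsLogZ c hc b :=
  (convexOn_gibbsLogZ c hc hnonneg hne).abs_secant_gap_le a b hx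

/-- Let `a ≤ b`, `x ∈ [0,1]`, `α = (1−x)·a + x·b` and
`κ = z(a) − 2·z((a+b)/2) + z(b)`.  Then
`|(z(α) − z(a)) − x·(z(b) − z(a))| ≤ κ`. -/
theorem stmt_7 (n : ℝ) (hn : 1 ≤ n) (c : ℝ → ℝ) (hc : (Function.support c).Finite)
    (hsupp : Function.support c ⊆ {0} ∪ Set.Icc 1 n)
    (hnonneg : ∀ x, 0 ≤ c x) (hne : c ≠ 0)
    (a b : ℝ) (hab : a ≤ b) (x : ℝ) (hx : x ∈ Set.Icc (0 : ℝ) 1) :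
    |(gibbsLogZ c hc ((1 - x) * a + x * b) - gibbsLogZ c hc a)
        - x * (gibbsLogZ c hc b - gibbsLogZ c hc a)| ≤
      gibbsLogZ c hc a - 2 * gibbsLogZ c hc ((a + b) / 2) + gibbsLogZ c hc b :=
  stmt_7_general c hc hnonneg hne a b x hx
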